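/- Fix reals T₀, T₁, T₂, T₃ ∈ (π, 2π) and Q₁, Q₂, Q₃ with 0 < Q_k − T_a < π for all a ∈ {0,1,2,3} and k ∈ {1,2,3}. Set T = max_a T_a, M = min(2π, Q₁, Q₂, Q₃), and g(x) = (sin(2π−x)·sin(Q₁−x)·sin(Q₂−x)·sin(Q₃−x)) / (sin(x−T₀)·sin(x−T₁)·sin(x−T₂)·sin(x−T₃)). Then g is strictly decreasing on the interval (T, M). -/
import Mathlib


open Real Filter Finset

/-- The function `g(x) = (sin(2π−x) sin(Q₁−x) sin(Q₂−x) sin(Q₃−x)) /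
(sin(x−T₀) sin(x−T₁) sin(x−T₂) sin(x−T₃))` (here `Q 0, Q 1, Q 2` play the roles of
`Q₁, Q₂, Q₃`). -/
noncomputable def gfun (T : Fin 4 → ℝ) (Q : Fin 3 → ℝ) (x : ℝ) : ℝ :=
  (Real.sin (2 * Real.pi - x) * Real.sin (Q 0 - x) * Real.sin (Q 1 - x) *
      Real.sin (Q 2 - x)) /
    (Real.sin (x - T 0) * Real.sin (x - T 1) * Real.sin (x - T 2) * Real.sin (x - T 3))

/-- `T = max_a T_a`. -/
noncomputable def Tmax (T : Fin 4 → ℝ) : ℝ := max (max (T 0) (T 1)) (max (T 2) (T 3))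

/-- `M = min(2π, Q₁, Q₂, Q₃)`. -/
noncomputable def Mmin (Q : Fin 3 → ℝ) : ℝ := min (2 * Real.pi) (min (Q 0) (min (Q 1) (Q 2)))

/-- Each paired ratio is positive. -/
lemma ratio_pos {α β y : ℝ} (hβα : β - α < Real.pi) (hy1 : α < y) (hy2 : y < β) :
    0 < Real.sin (β - y) / Real.sin (y - α) := by
  have s1 : 0 < Real.sin (y - α) :=
    Real.sin_pos_of_pos_of_lt_pi (by linarith) (by linarith)
  have s2 : 0 < Real.sin (β - y) :=
    Real.sin_pos_of_pos_of_lt_pi (by linarith) (by linarith)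
  exact div_pos s2 s1

/-- Each paired ratio is strictly decreasing. -/
lemma ratio_anti {α β x y : ℝ} (hβα : β - α < Real.pi) (hx : α < x) (hxy : x < y)
    (hy : y < β) :
    Real.sin (β - y) / Real.sin (y - α) < Real.sin (β - x) / Real.sin (x - α) := by
  have s1 : 0 < Real.sin (x - α) :=
    Real.sin_pos_of_pos_of_lt_pi (by linarith) (by linarith)
  have s2 : 0 < Real.sin (y - α) :=
    Real.sin_pos_of_pos_of_lt_pi (by linarith) (by linarith)
  have s5 : 0 < Real.sin (β - α) :=
    Real.sin_pos_of_pos_of_lt_pi (by linarith) (by linarith)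
  have s6 : 0 < Real.sin (y - x) :=
    Real.sin_pos_of_pos_of_lt_pi (by linarith) (by linarith)
  rw [div_lt_div_iff₀ s2 s1]
  have key : Real.sin (β - x) * Real.sin (y - α) - Real.sin (β - y) * Real.sin (x - α)
      = Real.sin (β - α) * Real.sin (y - x) := by
    simp only [Real.sin_sub, Real.cos_sub]
    ring
  nlinarith [mul_pos s5 s6]

/-- for `T₀,…,T₃ ∈ (π,2π)` and `Q₁,Q₂,Q₃` with `0 < Q_k − T_a < π` for all `a,k`,
the function `g` is strictly decreasing on `(T, M)`. -/
theorem gfun_strictAntiOn (T : Fin 4 → ℝ) (Q : Fin 3 → ℝ)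
    (hT : ∀ a, T a ∈ Set.Ioo Real.pi (2 * Real.pi))
    (hQT : ∀ (k : Fin 3) (a : Fin 4), Q k - T a ∈ Set.Ioo 0 Real.pi) :
    StrictAntiOn (gfun T Q) (Set.Ioo (Tmax T) (Mmin Q)) := by
  intro x hx y hy hxy
  have hrw : ∀ z : ℝ, gfun T Q z =
      Real.sin (2 * Real.pi - z) / Real.sin (z - T 0) *
        (Real.sin (Q 0 - z) / Real.sin (z - T 1)) *
        (Real.sin (Q 1 - z) / Real.sin (z - T 2)) *
        (Real.sin (Q 2 - z) / Real.sin (z - T 3)) := by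
    intro z
    simp only [gfun]
    rw [div_mul_div_comm, div_mul_div_comm, div_mul_div_comm]
  -- bounds
  have hT0 := hT 0; have hT1 := hT 1; have hT2 := hT 2; have hT3 := hT 3
  have hQ00 := hQT 0 0; have hQ01 := hQT 0 1
  have hQ12 := hQT 1 2; have hQ23 := hQT 2 3
  simp only [Set.mem_Ioo] at *
  have hTm0 : T 0 ≤ Tmax T := le_trans (le_max_left _ _) (le_max_left _ _)
  have hTm1 : T 1 ≤ Tmax T := le_trans (le_max_right _ _) (le_max_left _ _)
  have hTm2 : T 2 ≤ Tmax T := le_trans (le_max_left _ _) (le_max_right _ _)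
  have hTm3 : T 3 ≤ Tmax T := le_trans (le_max_right _ _) (le_max_right _ _)
  have hM0 : Mmin Q ≤ 2 * Real.pi := min_le_left _ _
  have hM1 : Mmin Q ≤ Q 0 := le_trans (min_le_right _ _) (min_le_left _ _)
  have hM2 : Mmin Q ≤ Q 1 :=
    le_trans (min_le_right _ _) (le_trans (min_le_right _ _) (min_le_left _ _))
  have hM3 : Mmin Q ≤ Q 2 :=
    le_trans (min_le_right _ _) (le_trans (min_le_right _ _) (min_le_right _ _))
  obtain ⟨hx1, hx2⟩ := hx
  obtain ⟨hy1, hy2⟩ := hy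
  -- per-pair gap bounds `β - α < π`
  have g0 : 2 * Real.pi - T 0 < Real.pi := by linarith [hT0.1]
  have g1 : Q 0 - T 1 < Real.pi := hQ01.2
  have g2 : Q 1 - T 2 < Real.pi := hQ12.2
  have g3 : Q 2 - T 3 < Real.pi := hQ23.2
  -- strict inequalities for each factor
  have h1 := ratio_anti g0 (by linarith) hxy (by linarith)
  have h2 := ratio_anti g1 (by linarith) hxy (by linarith)
  have h3 := ratio_anti g2 (by linarith) hxy (by linarith)
  have h4 := ratio_anti g3 (by linarith) hxy (by linarith)
  have p1 := ratio_pos g0 (by linarith) (by linarith : y < 2 * Real.pi)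
  have p2 := ratio_pos g1 (by linarith) (by linarith : y < Q 0)
  have p3 := ratio_pos g2 (by linarith) (by linarith : y < Q 1)
  rw [hrw x, hrw y]
  exact mul_lt_mul''
    (mul_lt_mul'' (mul_lt_mul'' h1 h2 p1.le p2.le) h3 (by positivity) p3.le)
    h4 (by positivity)
    (ratio_pos g3 (by linarith) (by linarith : y < Q 2)).le
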